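/- arXiv:2509.22855 — 2 statements merged into one kernel-verified Lean document; each statement's English description precedes it below -/
import Mathlib

section
/- Let L and K be positive integers with K ≤ L, let c₁ be a positive integer, and let w_m be a real number with 0 < w_m < 1/K. Define c₂ = K·⌈(w_m·K·c₁/L + L − K + 1)/(1 − K·w_m)⌉. Then c₂ > 0 and (c₂/K − (L − K + 1))/(K·c₁/L + c₂) ≥ w_m. -/
theorem stmt_1 (L K c₁ : ℕ) (hL : 0 < L) (hK : 0 < K) (hKL : K ≤ L) (hc₁ : 0 < c₁)
    (w_m : ℝ) (hw : 0 < w_m) (hwK : w_m < 1 / K)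
    (c₂ : ℝ)
    (hc₂ : c₂ = (K : ℝ) *
      ((⌈(w_m * K * c₁ / L + L - K + 1) / (1 - K * w_m)⌉ : ℤ) : ℝ)) :
    0 < c₂ ∧ (c₂ / K - ((L : ℝ) - K + 1)) / ((K : ℝ) * c₁ / L + c₂) ≥ w_m := by
  have hLpos : (0:ℝ) < L := by exact_mod_cast hL
  have hKpos : (0:ℝ) < K := by exact_mod_cast hK
  have hKLr : (K:ℝ) ≤ L := by exact_mod_cast hKL
  have hc₁pos : (0:ℝ) < c₁ := by exact_mod_cast hc₁
  have hden : (0:ℝ) < 1 - K * w_m := by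
    have h1 : w_m * K < 1 := (lt_div_iff₀ hKpos).mp hwK
    nlinarith
  obtain ⟨N, hNdef⟩ : ∃ N : ℝ,
      N = ((⌈(w_m * K * c₁ / L + L - K + 1) / (1 - K * w_m)⌉ : ℤ) : ℝ) := ⟨_, rfl⟩
  rw [← hNdef] at hc₂
  have hxpos : 0 < w_m * K * c₁ / L + L - K + 1 := by
    have : 0 < w_m * K * c₁ / L := by positivity
    nlinarith
  have hNx : (w_m * K * c₁ / L + L - K + 1) / (1 - K * w_m) ≤ N := hNdef ▸ Int.le_ceil _
  have hNpos : 0 < N := lt_of_lt_of_le (by positivity) hNx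
  have hc₂pos : 0 < c₂ := by rw [hc₂]; positivity
  refine ⟨hc₂pos, ?_⟩
  have hkey : w_m * K * c₁ / L + L - K + 1 ≤ N * (1 - K * w_m) := by
    rw [div_le_iff₀ hden] at hNx; linarith
  have hdpos : (0:ℝ) < (K : ℝ) * c₁ / L + c₂ := by positivity
  rw [ge_iff_le, le_div_iff₀ hdpos, hc₂]
  have hcK : (K:ℝ) * N / K = N := by field_simp
  rw [hcK]
  ring_nf at hkey ⊢
  linarith [hkey]
end

section
/- Let w_m, w_a, α, t be real numbers with 0 ≤ w_m < w_a ≤ 1, α > 1, and t ≥ 1, and let m ≥ 0 and n ≥ 1 be integers. Then (m·w_m + n·w_a)/(n + m) + √(α·log t/(n + m)) − √(n·log t)/(n + m) > w_m. -/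
theorem stmt_3 (w_m w_a α t : ℝ) (h0 : 0 ≤ w_m) (h1 : w_m < w_a) (h2 : w_a ≤ 1)
    (hα : 1 < α) (ht : 1 ≤ t) (m n : ℕ) (hn : 1 ≤ n) :
    ((m : ℝ) * w_m + (n : ℝ) * w_a) / ((n : ℝ) + m)
      + Real.sqrt (α * Real.log t / ((n : ℝ) + m))
      - Real.sqrt ((n : ℝ) * Real.log t) / ((n : ℝ) + m) > w_m := by
  set L := Real.log t with hLdef
  have hL0 : 0 ≤ L := Real.log_nonneg ht
  have hn1 : (1:ℝ) ≤ n := by exact_mod_cast hn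
  have hm0 : (0:ℝ) ≤ m := Nat.cast_nonneg m
  have hs : 0 < (n:ℝ) + m := by linarith
  have hA : w_m < ((m:ℝ) * w_m + n * w_a) / ((n:ℝ) + m) := by
    rw [lt_div_iff₀ hs]; nlinarith
  have hB : Real.sqrt ((n:ℝ) * L) / ((n:ℝ) + m) ≤ Real.sqrt (α * L / ((n:ℝ) + m)) := by
    rw [div_le_iff₀ hs]
    have harg : 0 ≤ α * L / ((n:ℝ) + m) :=
      div_nonneg (mul_nonneg (by linarith) hL0) hs.le
    have h1 : Real.sqrt (α * L / ((n:ℝ) + m)) * ((n:ℝ) + m)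
        = Real.sqrt (α * L * ((n:ℝ) + m)) := by
      rw [show α * L * ((n:ℝ) + m) = α * L / ((n:ℝ) + m) * ((n:ℝ) + m) ^ 2 by
        field_simp, Real.sqrt_mul harg, Real.sqrt_sq hs.le]
    rw [h1]
    apply Real.sqrt_le_sqrt
    nlinarith [mul_le_mul_of_nonneg_left (show (n:ℝ) ≤ α * ((n:ℝ) + m) by nlinarith) hL0]
  linarith
end
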